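/- arXiv:2501.09839 — 5 statements merged into one kernel-verified Lean document; each statement's English description precedes it below -/
import Mathlib

section
/- Suppose φ is an (L,C)-quasi-isometry from a graph G to a graph H, and (T,(B_t : t ∈ V(T))) is a pseudo-tree-decomposition of H of width at most k-1. For each t ∈ V(T), define D_t to be the set of vertices v ∈ V(G) such that dist_H(φ(v), h) ≤ L + C for some h ∈ B_t. Then (T,(D_t : t ∈ V(T))) is a tree-decomposition of G, and each bag D_t is the union of at most k sets, each of diameter at most 2L(L+C)+C in G. -/
open SimpleGraph Set

/-- `φ` is an `(L,C)`-quasi-isometry from `G` to `H`. -/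
def IsQuasiIsometry {V W : Type} (G : SimpleGraph V) (H : SimpleGraph W)
    (L C : ℕ) (φ : V → W) : Prop :=
  (∀ u v : V, G.edist u v ≠ ⊤ →
      H.edist (φ u) (φ v) ≤ L * G.edist u v + C) ∧
  (∀ u v : V, H.edist (φ u) (φ v) ≠ ⊤ →
      G.edist u v ≤ L * H.edist (φ u) (φ v) + C) ∧
  (∀ y : W, ∃ v : V, H.edist (φ v) y ≤ C)

/-- `(T, B)` is a tree-decomposition of `G`. -/
structure IsTreeDecomp {V τ : Type} (G : SimpleGraph V) (T : SimpleGraph τ)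
    (B : τ → Set V) : Prop where
  isTree : T.IsTree
  covers : ∀ v : V, ∃ t, v ∈ B t
  edges : ∀ u v : V, G.Adj u v → ∃ t, u ∈ B t ∧ v ∈ B t
  interp : ∀ t₁ t₂ t₃ : τ, ∀ p : T.Walk t₁ t₃, p.IsPath → t₂ ∈ p.support →
    B t₁ ∩ B t₃ ⊆ B t₂

/-- `(T, B)` is a pseudo-tree-decomposition of `G`. -/
structure IsPseudoTreeDecomp {V τ : Type} (G : SimpleGraph V) (T : SimpleGraph τ)
    (B : τ → Set V) : Prop where
  isTree : T.IsTree
  covers : ∀ v : V, ∃ t, v ∈ B t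
  edges : ∀ u v : V, G.Adj u v → (∃ t, u ∈ B t ∧ v ∈ B t) ∨
    (∃ s t, T.Adj s t ∧ B s \ B t = {u} ∧ B t \ B s = {v})
  interp : ∀ t₁ t₂ t₃ : τ, ∀ p : T.Walk t₁ t₃, p.IsPath → t₂ ∈ p.support →
    B t₁ ∩ B t₃ ⊆ B t₂

/-- `(B 0, …, B (n-1))` is a pseudo-path-decomposition of `G`. -/
structure IsPseudoPathDecomp {V : Type} (G : SimpleGraph V) {n : ℕ}
    (B : Fin n → Set V) : Prop where
  covers : ∀ v : V, ∃ i, v ∈ B i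
  edges : ∀ u v : V, G.Adj u v → (∃ i, u ∈ B i ∧ v ∈ B i) ∨
    (∃ i : Fin n, ∃ hi : i.1 + 1 < n,
      B i \ B ⟨i.1 + 1, hi⟩ = {u} ∧ B ⟨i.1 + 1, hi⟩ \ B i = {v})
  interp : ∀ i j l : Fin n, i ≤ j → j ≤ l → B i ∩ B l ⊆ B j

/-- `(B 0, …, B (n-1))` is a path-decomposition of `G`. -/
structure IsPathDecomp {V : Type} (G : SimpleGraph V) {n : ℕ}
    (B : Fin n → Set V) : Prop where
  covers : ∀ v : V, ∃ i, v ∈ B i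
  edges : ∀ u v : V, G.Adj u v → ∃ i, u ∈ B i ∧ v ∈ B i
  interp : ∀ i j l : Fin n, i ≤ j → j ≤ l → B i ∩ B l ⊆ B j

/-- `G` has a tree-decomposition in which every bag has at most `k` vertices
(i.e. tree-width at most `k - 1`). -/
def TreewidthBagLE {V : Type} (G : SimpleGraph V) (k : ℕ) : Prop :=
  ∃ (τ : Type) (T : SimpleGraph τ) (B : τ → Set V),
    IsTreeDecomp G T B ∧ ∀ t, (B t).encard ≤ k

/-- `G` has a pseudo-tree-decomposition in which every bag has at most `k` vertices
(i.e. pseudo-tree-width at most `k - 1`). -/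
def PseudoTreewidthBagLE {V : Type} (G : SimpleGraph V) (k : ℕ) : Prop :=
  ∃ (τ : Type) (T : SimpleGraph τ) (B : τ → Set V),
    IsPseudoTreeDecomp G T B ∧ ∀ t, (B t).encard ≤ k


/-- `b` lies on every walk from `a` to `c` in `T`. -/
def TSep {τ : Type} (T : SimpleGraph τ) (a b c : τ) : Prop :=
  ∀ w : T.Walk a c, b ∈ w.support

lemma tsep_split {τ : Type} {T : SimpleGraph τ} {a b c : τ} (s : τ)
    (h : TSep T a b c) : TSep T a b s ∨ TSep T s b c := by
  by_cases h1 : TSep T a b s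
  · exact Or.inl h1
  · right
    unfold TSep at h1
    push_neg at h1
    obtain ⟨w1, hw1⟩ := h1
    intro w2
    have h2 := h (w1.append w2)
    rw [SimpleGraph.Walk.mem_support_append_iff] at h2
    tauto

lemma key_lemma {W τ : Type} {H : SimpleGraph W} {T : SimpleGraph τ} {B : τ → Set W}
    (hedges : ∀ u v : W, H.Adj u v → (∃ t, u ∈ B t ∧ v ∈ B t) ∨
      (∃ s t, T.Adj s t ∧ B s \ B t = {u} ∧ B t \ B s = {v}))
    (hsep : ∀ a b c : τ, TSep T a b c → B a ∩ B c ⊆ B b)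
    {h₁ h₃ : W} (q : H.Walk h₁ h₃) (t₂ t₃ : τ) :
    ∀ t₁, TSep T t₁ t₂ t₃ → h₁ ∈ B t₁ → h₃ ∈ B t₃ → ∃ h ∈ q.support, h ∈ B t₂ := by
  induction q with
  | nil =>
    intro t₁ hs hb1 hb3
    exact ⟨_, by simp, hsep _ _ _ hs ⟨hb1, hb3⟩⟩
  | @cons a b c adj q ih =>
    intro t₁ hs hb1 hb3
    rcases hedges a b adj with ⟨s, hs1, hs2⟩ | ⟨s, t, hst, he1, he2⟩
    · rcases tsep_split s hs with h' | h'
      · exact ⟨a, by simp, hsep _ _ _ h' ⟨hb1, hs1⟩⟩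
      · obtain ⟨h, hh1, hh2⟩ := ih s h' hs2 hb3
        exact ⟨h, by simp [hh1], hh2⟩
    · have hbs : a ∈ B s := by
        have : a ∈ B s \ B t := by rw [he1]; exact Set.mem_singleton a
        exact this.1
      have hbt : b ∈ B t := by
        have : b ∈ B t \ B s := by rw [he2]; exact Set.mem_singleton b
        exact this.1
      rcases tsep_split s hs with h' | h'
      · exact ⟨a, by simp, hsep _ _ _ h' ⟨hb1, hbs⟩⟩
      · rcases tsep_split t h' with h'' | h''
        · have h3 := h'' hst.toWalk
          simp [SimpleGraph.Adj.toWalk] at h3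
          rcases h3 with rfl | rfl
          · exact ⟨a, by simp, hbs⟩
          · exact ⟨b, by simp, hbt⟩
        · obtain ⟨h, hh1, hh2⟩ := ih t h'' hbt hb3
          exact ⟨h, by simp [hh1], hh2⟩

theorem stmt3 {V W τ : Type} (G : SimpleGraph V) (H : SimpleGraph W)
    (L C k : ℕ) (φ : V → W) (hφ : IsQuasiIsometry G H L C φ)
    (T : SimpleGraph τ) (B : τ → Set W)
    (hdec : IsPseudoTreeDecomp H T B) (hwid : ∀ t, (B t).encard ≤ k)
    (D : τ → Set V)
    (hD : ∀ t, D t = {v | ∃ h ∈ B t, H.edist (φ v) h ≤ ((L + C : ℕ) : ℕ∞)}) :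
    IsTreeDecomp G T D ∧
    ∀ t, ∃ F : Set (Set V), F.encard ≤ k ∧ ⋃₀ F = D t ∧
      ∀ X ∈ F, ∀ u ∈ X, ∀ v ∈ X,
        G.edist u v ≤ ((2 * L * (L + C) + C : ℕ) : ℕ∞) := by
  classical
  obtain ⟨hφ1, hφ2, hφ3⟩ := hφ
  have hsep : ∀ a b c : τ, TSep T a b c → B a ∩ B c ⊆ B b := by
    intro a b c hS x hx
    obtain ⟨w⟩ := hdec.isTree.isConnected.preconnected a c
    exact hdec.interp a b c w.bypass w.bypass_isPath (hS w.bypass) hx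
  have hmemD : ∀ t v, v ∈ D t ↔ ∃ h ∈ B t, H.edist (φ v) h ≤ ((L + C : ℕ) : ℕ∞) := by
    intro t v
    rw [hD t]
    exact Iff.rfl
  constructor
  · refine ⟨hdec.isTree, ?_, ?_, ?_⟩
    · intro v
      obtain ⟨t, ht⟩ := hdec.covers (φ v)
      exact ⟨t, (hmemD t v).2 ⟨φ v, ht, by simp [SimpleGraph.edist_self]⟩⟩
    · intro u v huv
      obtain ⟨t, ht⟩ := hdec.covers (φ v)
      refine ⟨t, (hmemD t u).2 ⟨φ v, ht, ?_⟩,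
        (hmemD t v).2 ⟨φ v, ht, by simp [SimpleGraph.edist_self]⟩⟩
      have h1 : G.edist u v ≤ 1 := by simpa using huv.toWalk.edist_le
      have hne : G.edist u v ≠ ⊤ := by
        intro h; rw [h] at h1; simp at h1
      calc H.edist (φ u) (φ v) ≤ L * G.edist u v + C := hφ1 u v hne
        _ ≤ L * 1 + C := by gcongr
        _ = ((L + C : ℕ) : ℕ∞) := by push_cast; ring
    · intro t₁ t₂ t₃ p hp hmem v hv
      have hS : TSep T t₁ t₂ t₃ := by
        intro w
        have huniq : w.bypass = p := congrArg Subtype.val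
          (isAcyclic_iff_path_unique.mp hdec.isTree.IsAcyclic
            ⟨w.bypass, w.bypass_isPath⟩ ⟨p, hp⟩)
        have hsub : p.support ⊆ w.support := huniq ▸ w.support_bypass_subset
        exact hsub hmem
      obtain ⟨h₁, hh₁, hd₁⟩ := (hmemD t₁ v).1 hv.1
      obtain ⟨h₃, hh₃, hd₃⟩ := (hmemD t₃ v).1 hv.2
      have hne1 : H.edist (φ v) h₁ ≠ ⊤ :=
        ne_top_of_le_ne_top (ENat.coe_ne_top _) hd₁
      have hne3 : H.edist (φ v) h₃ ≠ ⊤ :=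
        ne_top_of_le_ne_top (ENat.coe_ne_top _) hd₃
      obtain ⟨p₁, hp₁⟩ := exists_walk_of_edist_ne_top hne1
      obtain ⟨p₃, hp₃⟩ := exists_walk_of_edist_ne_top hne3
      obtain ⟨h₂, hq, hB⟩ := key_lemma hdec.edges hsep (p₁.reverse.append p₃) t₂ t₃ t₁ hS hh₁ hh₃
      refine (hmemD t₂ v).2 ⟨h₂, hB, ?_⟩
      rw [SimpleGraph.Walk.mem_support_append_iff] at hq
      rcases hq with hq | hq
      · rw [SimpleGraph.Walk.support_reverse, List.mem_reverse] at hq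
        calc H.edist (φ v) h₂ ≤ ((p₁.takeUntil h₂ hq).length : ℕ∞) :=
              (p₁.takeUntil h₂ hq).edist_le
          _ ≤ (p₁.length : ℕ∞) := by exact_mod_cast p₁.length_takeUntil_le hq
          _ = H.edist (φ v) h₁ := hp₁
          _ ≤ ((L + C : ℕ) : ℕ∞) := hd₁
      · calc H.edist (φ v) h₂ ≤ ((p₃.takeUntil h₂ hq).length : ℕ∞) :=
              (p₃.takeUntil h₂ hq).edist_le
          _ ≤ (p₃.length : ℕ∞) := by exact_mod_cast p₃.length_takeUntil_le hq
          _ = H.edist (φ v) h₃ := hp₃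
          _ ≤ ((L + C : ℕ) : ℕ∞) := hd₃
  · intro t
    refine ⟨(fun h => {v | H.edist (φ v) h ≤ ((L + C : ℕ) : ℕ∞)}) '' (B t), ?_, ?_, ?_⟩
    · exact le_trans (Set.encard_image_le _ _) (hwid t)
    · rw [hD t]
      ext v
      simp only [Set.mem_sUnion, Set.mem_image, Set.mem_setOf_eq]
      constructor
      · rintro ⟨X, ⟨h, hh, rfl⟩, hv⟩
        exact ⟨h, hh, hv⟩
      · rintro ⟨h, hh, hv⟩
        exact ⟨_, ⟨h, hh, rfl⟩, hv⟩
    · rintro X ⟨h, hh, rfl⟩ u hu v hv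
      simp only [Set.mem_setOf_eq] at hu hv
      have he : H.edist (φ u) (φ v) ≤ ((L + C : ℕ) : ℕ∞) + ((L + C : ℕ) : ℕ∞) := by
        calc H.edist (φ u) (φ v) ≤ H.edist (φ u) h + H.edist h (φ v) :=
              SimpleGraph.edist_triangle
          _ ≤ _ := add_le_add hu (by rw [SimpleGraph.edist_comm]; exact hv)
      have hne : H.edist (φ u) (φ v) ≠ ⊤ :=
        ne_top_of_le_ne_top (by rw [← Nat.cast_add]; exact ENat.coe_ne_top _) he
      calc G.edist u v ≤ L * H.edist (φ u) (φ v) + C := hφ2 u v hne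
        _ ≤ L * (((L + C : ℕ) : ℕ∞) + ((L + C : ℕ) : ℕ∞)) + C := by gcongr
        _ = ((2 * L * (L + C) + C : ℕ) : ℕ∞) := by push_cast; ring
end

section
/- If a graph G admits an (L,C)-quasi-isometry to a graph with pseudo-tree-width at most k-1, then G admits a tree-decomposition (T,(D_t : t ∈ V(T))) such that each bag D_t is the union of at most k sets, each of diameter at most 2L(L+C)+C in G. -/
open SimpleGraph Set

/-- In a tree, the support of a path is contained in the support of any walk
with the same endpoints. -/
lemma tree_path_support_subset {τ : Type} {T : SimpleGraph τ} (hT : T.IsTree)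
    {s s' : τ} (p q : T.Walk s s') (hp : p.IsPath) : p.support ⊆ q.support := by
  classical
  have h1 : p = q.bypass := (hT.existsUnique_path s s').unique hp q.bypass_isPath
  rw [h1]
  exact q.support_bypass_subset

/-- Any walk in `H` between a vertex of `B s` and a vertex of `B s'` meets every
bag `B t` with `t` on the tree path between `s` and `s'`. -/
lemma walk_meets_bag {W τ : Type} {H : SimpleGraph W} {T : SimpleGraph τ} {B : τ → Set W}
    (hd : IsPseudoTreeDecomp H T B) {s' t : τ} {b : W} (hb : b ∈ B s') :
    ∀ {a : W} (p : H.Walk a b) (s : τ), a ∈ B s →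
      ∀ (P : T.Walk s s'), P.IsPath → t ∈ P.support →
      ∃ x ∈ p.support, x ∈ B t := by
  classical
  suffices h : ∀ {a b : W} (p : H.Walk a b) (s s' : τ), a ∈ B s → b ∈ B s' →
      ∀ (P : T.Walk s s'), P.IsPath → t ∈ P.support →
      ∃ x ∈ p.support, x ∈ B t by
    intro a p s ha P hP ht
    exact h p s s' ha hb P hP ht
  intro a b p
  induction p with
  | nil =>
    intro s s' ha hb P hP ht
    exact ⟨_, by simp, hd.interp s t s' P hP ht ⟨ha, hb⟩⟩
  | @cons a a' c hadj p ih =>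
    intro s s' ha hb P hP ht
    rcases hd.edges a a' hadj with ⟨s₀, ha₀, ha₀'⟩ | ⟨s₀, t₀, hst, he1, he2⟩
    · -- both ends in bag B s₀
      obtain ⟨P₁, hP₁⟩ := ((hd.isTree.isConnected.preconnected s s₀).some.toPath :
        T.Path s s₀)
      obtain ⟨P₂, hP₂⟩ := ((hd.isTree.isConnected.preconnected s₀ s').some.toPath :
        T.Path s₀ s')
      have htQ : t ∈ (P₁.append P₂).support :=
        tree_path_support_subset hd.isTree P (P₁.append P₂) hP ht
      rcases (SimpleGraph.Walk.mem_support_append_iff _ _).mp htQ with h1 | h2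
      · exact ⟨a, by simp, hd.interp s t s₀ P₁ hP₁ h1 ⟨ha, ha₀⟩⟩
      · obtain ⟨x, hx, hxt⟩ := ih s₀ s' ha₀' hb P₂ hP₂ h2
        exact ⟨x, by simp [hx], hxt⟩
    · -- pseudo-edge
      have ha₀ : a ∈ B s₀ := (he1.symm ▸ Set.mem_singleton a : a ∈ B s₀ \ B t₀).1
      have ha₀' : a' ∈ B t₀ := (he2.symm ▸ Set.mem_singleton a' : a' ∈ B t₀ \ B s₀).1
      obtain ⟨P₁, hP₁⟩ := ((hd.isTree.isConnected.preconnected s s₀).some.toPath :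
        T.Path s s₀)
      obtain ⟨P₂, hP₂⟩ := ((hd.isTree.isConnected.preconnected t₀ s').some.toPath :
        T.Path t₀ s')
      have htQ : t ∈ (P₁.append (SimpleGraph.Walk.cons hst P₂)).support :=
        tree_path_support_subset hd.isTree P _ hP ht
      rcases (SimpleGraph.Walk.mem_support_append_iff _ _).mp htQ with h1 | h2
      · exact ⟨a, by simp, hd.interp s t s₀ P₁ hP₁ h1 ⟨ha, ha₀⟩⟩
      · rw [SimpleGraph.Walk.support_cons, List.mem_cons] at h2
        rcases h2 with rfl | h2
        · exact ⟨a, by simp, ha₀⟩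
        · obtain ⟨x, hx, hxt⟩ := ih t₀ s' ha₀' hb P₂ hP₂ h2
          exact ⟨x, by simp [hx], hxt⟩

theorem stmt4 {V : Type} (G : SimpleGraph V) (L C k : ℕ)
    (h : ∃ (W : Type) (H : SimpleGraph W) (φ : V → W),
      IsQuasiIsometry G H L C φ ∧ PseudoTreewidthBagLE H k) :
    ∃ (τ : Type) (T : SimpleGraph τ) (D : τ → Set V),
      IsTreeDecomp G T D ∧
      ∀ t, ∃ F : Set (Set V), F.encard ≤ k ∧ ⋃₀ F = D t ∧
        ∀ X ∈ F, ∀ u ∈ X, ∀ v ∈ X,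
          G.edist u v ≤ ((2 * L * (L + C) + C : ℕ) : ℕ∞) := by
  classical
  obtain ⟨W, H, φ, ⟨h1, h2, h3⟩, τ, T, B, hd, hk⟩ := h
  set r : ℕ := L + C with hr
  set D : τ → Set V := fun t => {v | ∃ w ∈ B t, H.edist (φ v) w ≤ (r : ℕ∞)} with hD
  have ball_edist : ∀ {x : W} {n : ℕ}, H.edist x x ≤ (n : ℕ∞) := by
    intro x n; simp
  refine ⟨τ, T, D, ?_, ?_⟩
  · refine ⟨hd.isTree, ?_, ?_, ?_⟩
    · intro v
      obtain ⟨t, ht⟩ := hd.covers (φ v)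
      exact ⟨t, φ v, ht, ball_edist⟩
    · -- edges
      intro u v huv
      obtain ⟨t, ht⟩ := hd.covers (φ u)
      have hfin : G.edist u v ≠ ⊤ := by
        rw [← SimpleGraph.edist_eq_one_iff_adj] at huv
        simp [huv]
      have hH : H.edist (φ u) (φ v) ≤ (r : ℕ∞) := by
        calc H.edist (φ u) (φ v) ≤ L * G.edist u v + C := h1 u v hfin
        _ ≤ L * 1 + C := by
            gcongr
            rw [← SimpleGraph.edist_eq_one_iff_adj] at huv
            exact le_of_eq huv
        _ = (r : ℕ∞) := by rw [hr]; push_cast; ring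
      refine ⟨t, ⟨φ u, ht, ball_edist⟩, ⟨φ u, ht, ?_⟩⟩
      rw [SimpleGraph.edist_comm]; exact hH
    · -- interpolation
      intro t₁ t₂ t₃ P hP ht₂ u hu
      obtain ⟨⟨w₁, hw₁, hd₁⟩, ⟨w₃, hw₃, hd₃⟩⟩ := hu
      have hne₁ : H.edist (φ u) w₁ ≠ ⊤ := ne_top_of_le_ne_top (ENat.coe_ne_top r) hd₁
      have hne₃ : H.edist (φ u) w₃ ≠ ⊤ := ne_top_of_le_ne_top (ENat.coe_ne_top r) hd₃
      obtain ⟨q₁, hq₁⟩ := SimpleGraph.exists_walk_of_edist_ne_top hne₁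
      obtain ⟨q₃, hq₃⟩ := SimpleGraph.exists_walk_of_edist_ne_top hne₃
      have hq₁len : (q₁.length : ℕ∞) ≤ (r : ℕ∞) := hq₁ ▸ hd₁
      have hq₃len : (q₃.length : ℕ∞) ≤ (r : ℕ∞) := hq₃ ▸ hd₃
      obtain ⟨z, hz, hzt⟩ := walk_meets_bag hd hw₃ (q₁.reverse.append q₃) t₁ hw₁ P hP ht₂
      refine ⟨z, hzt, ?_⟩
      rcases (SimpleGraph.Walk.mem_support_append_iff _ _).mp hz with h | h
      · rw [SimpleGraph.Walk.support_reverse, List.mem_reverse] at h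
        calc H.edist (φ u) z ≤ ((q₁.takeUntil z h).length : ℕ∞) :=
              SimpleGraph.edist_le _
        _ ≤ (q₁.length : ℕ∞) := by
              exact_mod_cast Nat.cast_le.mpr (SimpleGraph.Walk.length_takeUntil_le q₁ h)
        _ ≤ (r : ℕ∞) := hq₁len
      · calc H.edist (φ u) z ≤ ((q₃.takeUntil z h).length : ℕ∞) :=
              SimpleGraph.edist_le _
        _ ≤ (q₃.length : ℕ∞) := by
              exact_mod_cast Nat.cast_le.mpr (SimpleGraph.Walk.length_takeUntil_le q₃ h)
        _ ≤ (r : ℕ∞) := hq₃len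
  · -- bags are unions of ≤ k balls
    intro t
    refine ⟨(fun w => {v | H.edist (φ v) w ≤ (r : ℕ∞)}) '' (B t), ?_, ?_, ?_⟩
    · exact le_trans (Set.encard_image_le _ _) (hk t)
    · ext v
      simp only [Set.mem_sUnion, Set.mem_image, hD, Set.mem_setOf_eq]
      constructor
      · rintro ⟨X, ⟨w, hw, rfl⟩, hv⟩; exact ⟨w, hw, hv⟩
      · rintro ⟨w, hw, hv⟩; exact ⟨_, ⟨w, hw, rfl⟩, hv⟩
    · rintro X ⟨w, hw, rfl⟩ u hu v hv
      simp only [Set.mem_setOf_eq] at hu hv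
      have hH : H.edist (φ u) (φ v) ≤ ((r : ℕ∞) + (r : ℕ∞)) := by
        calc H.edist (φ u) (φ v) ≤ H.edist (φ u) w + H.edist w (φ v) :=
              SimpleGraph.edist_triangle
        _ ≤ (r : ℕ∞) + (r : ℕ∞) := by
              gcongr
              rw [SimpleGraph.edist_comm]; exact hv
      have hne : H.edist (φ u) (φ v) ≠ ⊤ := by
        refine ne_top_of_le_ne_top ?_ hH
        simp [← Nat.cast_add]
      calc G.edist u v ≤ L * H.edist (φ u) (φ v) + C := h2 u v hne
      _ ≤ L * ((r : ℕ∞) + (r : ℕ∞)) + C := by gcongr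
      _ = ((2 * L * (L + C) + C : ℕ) : ℕ∞) := by rw [hr]; push_cast; ring
end

section
/- If a connected graph G admits an (L,C)-quasi-isometry to a tree, then G admits a tree-decomposition (T,(B_t)) such that each bag B_t has diameter at most L(L+C+1)+C in G. -/
open SimpleGraph Set

section Aux

variable {W : Type} {H : SimpleGraph W}

private lemma edist_getVert_le (w : H.Walk a b) (k : ℕ) :
    H.edist a (w.getVert k) ≤ (k : ℕ∞) := by
  induction k with
  | zero => simp [SimpleGraph.edist_self]
  | succ k ih =>
    by_cases h : w.length ≤ k
    · rw [w.getVert_of_length_le (h.trans (Nat.le_succ k))]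
      rw [w.getVert_of_length_le h] at ih
      exact ih.trans (by exact_mod_cast Nat.cast_le.mpr (Nat.le_succ k))
    · push_neg at h
      have hadj := w.adj_getVert_succ h
      calc H.edist a (w.getVert (k + 1))
          ≤ H.edist a (w.getVert k) + H.edist (w.getVert k) (w.getVert (k + 1)) :=
            SimpleGraph.edist_triangle
        _ ≤ (k : ℕ∞) + 1 := by
            gcongr
            rw [SimpleGraph.edist_eq_one_iff_adj.mpr hadj]
        _ = ((k + 1 : ℕ) : ℕ∞) := by push_cast; ring

private lemma edist_getVert_le' (w : H.Walk a b) {k : ℕ} (hk : k ≤ w.length) :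
    H.edist (w.getVert k) b ≤ ((w.length - k : ℕ) : ℕ∞) := by
  have h := edist_getVert_le w.reverse (w.length - k)
  rw [SimpleGraph.Walk.getVert_reverse, Nat.sub_sub_self hk] at h
  rw [SimpleGraph.edist_comm]
  exact h

end Aux

theorem stmt15 {V τ : Type} (G : SimpleGraph V) (hconn : G.Connected)
    (L C : ℕ) (T : SimpleGraph τ) (hT : T.IsTree) (φ : V → τ)
    (hφ : IsQuasiIsometry G T L C φ) :
    ∃ (σ : Type) (S : SimpleGraph σ) (B : σ → Set V),
      IsTreeDecomp G S B ∧
      ∀ t, ∀ u ∈ B t, ∀ v ∈ B t,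
        G.edist u v ≤ ((L * (L + C + 1) + C : ℕ) : ℕ∞) := by
  classical
  set r : ℕ := (L + C + 1) / 2 with hr
  refine ⟨τ, T, fun t => {v | T.edist (φ v) t ≤ (r : ℕ∞)}, ?_, ?_⟩
  · constructor
    · exact hT
    · intro v
      exact ⟨φ v, by simp [SimpleGraph.edist_self]⟩
    · intro u v huv
      have hedG : G.edist u v ≤ 1 := by
        have := SimpleGraph.edist_le huv.toWalk
        simpa using this
      have hne : G.edist u v ≠ ⊤ := fun h => by simp [h] at hedG
      have h1 : T.edist (φ u) (φ v) ≤ ((L + C : ℕ) : ℕ∞) := by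
        calc T.edist (φ u) (φ v) ≤ L * G.edist u v + C := hφ.1 u v hne
          _ ≤ L * 1 + C := by gcongr
          _ = ((L + C : ℕ) : ℕ∞) := by push_cast; ring
      have hne2 : T.edist (φ u) (φ v) ≠ ⊤ :=
        fun h => ((ENat.coe_lt_top _).not_ge (h ▸ h1)).elim
      obtain ⟨w, hw⟩ := SimpleGraph.exists_walk_of_edist_ne_top hne2
      have hwlen : w.length ≤ L + C := by
        rw [← hw] at h1; exact_mod_cast h1
      set k : ℕ := min r w.length with hk
      refine ⟨w.getVert k, ?_, ?_⟩
      · show T.edist (φ u) (w.getVert k) ≤ (r : ℕ∞)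
        exact (edist_getVert_le w k).trans (by exact_mod_cast Nat.cast_le.mpr (min_le_left _ _))
      · show T.edist (φ v) (w.getVert k) ≤ (r : ℕ∞)
        rw [SimpleGraph.edist_comm]
        refine (edist_getVert_le' w (min_le_right r w.length)).trans ?_
        have : w.length - k ≤ r := by omega
        exact_mod_cast Nat.cast_le.mpr this
    · intro t₁ t₂ t₃ p hp ht₂ v hv
      obtain ⟨hv1, hv3⟩ := hv
      simp only [Set.mem_setOf_eq] at hv1 hv3 ⊢
      have hne1 : T.edist (φ v) t₁ ≠ ⊤ := fun h => by simp [h] at hv1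
      have hne3 : T.edist (φ v) t₃ ≠ ⊤ := fun h => by simp [h] at hv3
      obtain ⟨w1, hw1⟩ := SimpleGraph.exists_walk_of_edist_ne_top hne1
      obtain ⟨w3, hw3⟩ := SimpleGraph.exists_walk_of_edist_ne_top hne3
      set W := w1.bypass.reverse.append w3.bypass with hW
      have hWpath : W.bypass.IsPath := SimpleGraph.Walk.bypass_isPath W
      have hpuniq := SimpleGraph.isAcyclic_iff_path_unique.mp hT.IsAcyclic
        ⟨p, hp⟩ ⟨W.bypass, hWpath⟩
      have hpeq : p = W.bypass := congrArg Subtype.val hpuniq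
      have ht₂' : t₂ ∈ W.support :=
        SimpleGraph.Walk.support_bypass_subset W (hpeq ▸ ht₂)
      rw [SimpleGraph.Walk.mem_support_append_iff] at ht₂'
      rcases ht₂' with h2 | h2
      · rw [SimpleGraph.Walk.support_reverse, List.mem_reverse] at h2
        calc T.edist (φ v) t₂
            ≤ ((w1.bypass.takeUntil t₂ h2).length : ℕ∞) :=
              SimpleGraph.edist_le _
          _ ≤ (w1.length : ℕ∞) := by
              exact_mod_cast Nat.cast_le.mpr
                ((SimpleGraph.Walk.length_takeUntil_le _ h2).trans
                  (SimpleGraph.Walk.length_bypass_le w1))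
          _ = T.edist (φ v) t₁ := hw1
          _ ≤ (r : ℕ∞) := hv1
      · calc T.edist (φ v) t₂
            ≤ ((w3.bypass.takeUntil t₂ h2).length : ℕ∞) :=
              SimpleGraph.edist_le _
          _ ≤ (w3.length : ℕ∞) := by
              exact_mod_cast Nat.cast_le.mpr
                ((SimpleGraph.Walk.length_takeUntil_le _ h2).trans
                  (SimpleGraph.Walk.length_bypass_le w3))
          _ = T.edist (φ v) t₃ := hw3
          _ ≤ (r : ℕ∞) := hv3
  · intro t u hu v hv
    simp only [Set.mem_setOf_eq] at hu hv
    have h2r : (r : ℕ∞) + (r : ℕ∞) ≤ ((L + C + 1 : ℕ) : ℕ∞) := by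
      have : r + r ≤ L + C + 1 := by omega
      exact_mod_cast Nat.cast_le.mpr this
    have hTd : T.edist (φ u) (φ v) ≤ ((L + C + 1 : ℕ) : ℕ∞) := by
      calc T.edist (φ u) (φ v)
          ≤ T.edist (φ u) t + T.edist t (φ v) := SimpleGraph.edist_triangle
        _ ≤ (r : ℕ∞) + (r : ℕ∞) :=
            add_le_add hu (by rw [SimpleGraph.edist_comm]; exact hv)
        _ ≤ ((L + C + 1 : ℕ) : ℕ∞) := h2r
    have hne : T.edist (φ u) (φ v) ≠ ⊤ :=
      fun h => ((ENat.coe_lt_top _).not_ge (h ▸ hTd)).elim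
    calc G.edist u v ≤ L * T.edist (φ u) (φ v) + C := hφ.2.1 u v hne
      _ ≤ L * ((L + C + 1 : ℕ) : ℕ∞) + C := by gcongr
      _ = ((L * (L + C + 1) + C : ℕ) : ℕ∞) := by push_cast; ring
end

section
/- For all r, if G is a connected graph admitting a tree-decomposition (T,(B_t)) such that every bag B_t has diameter at most r in G, then G admits a (1, 6r+1)-quasi-isometry to a tree. -/
open SimpleGraph Set

/-!
Root `G` at `v₀` and call two vertices at the same distance `n` from `v₀` level-related when a
walk joins them without coming closer than `n` to `v₀`. Joining every level class to the class
of a neighbour one step closer to `v₀` makes the classes a tree, and sending a vertex to its class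
moves adjacent vertices by at most one. Climbing from the classes of `u` and `v` to their common
ancestor gives level-related vertices `x₁, x₂` with `d(u, x₁) + d(v, x₂)` at most the tree
distance, so the map is a `(1, 3r)`-quasi-isometry once level-related vertices are at distance at
most `3r`. For that, on the `T`-path between bags containing them every adhesion meets both the
walk joining them above level `n` and the detour through `v₀`, and the first adhesion leading to
bags near the second vertex yields a bag near both.
-/

namespace SimpleGraph

section Walks

variable {V W : Type*} {G : SimpleGraph V} {H : SimpleGraph W} {φ : V → W}

lemma Walk.dist_add_dist_le_length {u v x : V} (p : G.Walk u v) (hx : x ∈ p.support) :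
    G.dist u x + G.dist x v ≤ p.length := by
  classical
  rw [← p.take_spec hx, Walk.length_append]
  exact add_le_add (dist_le _) (dist_le _)

lemma dist_add_dist_le_or_of_mem_support_reverse_append {v₀ w₁ w₂ y : V} {p₁ : G.Walk v₀ w₁}
    {p₂ : G.Walk v₀ w₂} (hp₁ : p₁.length = G.dist v₀ w₁) (hp₂ : p₂.length = G.dist v₀ w₂)
    (hy : y ∈ (p₁.reverse.append p₂).support) :
    G.dist v₀ y + G.dist y w₁ ≤ G.dist v₀ w₁ ∨ G.dist v₀ y + G.dist y w₂ ≤ G.dist v₀ w₂ := by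
  rcases Walk.mem_support_append_iff _ _ |>.mp hy with hy | hy
  · exact .inl (hp₁ ▸ p₁.dist_add_dist_le_length (by simpa using hy))
  · exact .inr (hp₂ ▸ p₂.dist_add_dist_le_length hy)

lemma IsAcyclic.edges_subset_edges_of_isPath (hG : G.IsAcyclic) {u v : V} {q : G.Walk u v}
    (hq : q.IsPath) (w : G.Walk u v) : q.edges ⊆ w.edges := by
  classical
  have : q = w.bypass :=
    congrArg Subtype.val ((hG.subsingleton_path u v).elim ⟨q, hq⟩ ⟨_, w.bypass_isPath⟩)
  exact this ▸ w.edges_bypass_subset_edges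

lemma Walk.exists_walk_length_le_of_forall_adj
    (hφ : ∀ x y, G.Adj x y → φ x = φ y ∨ H.Adj (φ x) (φ y)) {u v : V} (p : G.Walk u v) :
    ∃ q : H.Walk (φ u) (φ v), q.length ≤ p.length := by
  induction p with
  | nil => exact ⟨.nil, le_rfl⟩
  | @cons x y v hxy p ih =>
    obtain ⟨q, hq⟩ := ih
    rcases hφ x y hxy with hφxy | hφxy
    · exact ⟨q.copy hφxy.symm rfl, by simp only [Walk.length_copy, Walk.length_cons]; omega⟩
    · exact ⟨q.cons hφxy, by simpa using hq⟩

lemma edist_le_of_forall_adj (hφ : ∀ x y, G.Adj x y → φ x = φ y ∨ H.Adj (φ x) (φ y))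
    (u v : V) : H.edist (φ u) (φ v) ≤ G.edist u v := by
  by_cases huv : G.Reachable u v
  · obtain ⟨p, hp⟩ := huv.exists_walk_length_eq_edist
    obtain ⟨q, hq⟩ := p.exists_walk_length_le_of_forall_adj hφ
    exact (edist_le q).trans (hp ▸ by exact_mod_cast hq)
  · rw [edist_eq_top_of_not_reachable huv]
    exact le_top

end Walks

section ParentGraph

variable {α : Type*} {f : α → α} {lev : α → ℕ}

variable (f lev) in
def parentGraph : SimpleGraph α :=
  fromRel fun a b => a = f b ∧ lev b ≠ 0

lemma parentGraph_adj_self (hf : ∀ a, lev a ≠ 0 → lev (f a) + 1 = lev a) {a : α}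
    (ha : lev a ≠ 0) : (parentGraph f lev).Adj a (f a) :=
  ⟨fun h => by have := hf a ha; rw [← h] at this; omega, .inr ⟨rfl, ha⟩⟩

lemma lev_iterate (hf : ∀ a, lev a ≠ 0 → lev (f a) + 1 = lev a) {a : α} {j : ℕ}
    (hj : j ≤ lev a) : lev (f^[j] a) = lev a - j := by
  induction j with
  | zero => rfl
  | succ j ih =>
    have := hf (f^[j] a) (by omega)
    rw [Function.iterate_succ_apply']
    omega

lemma parentGraph_reachable_iterate (hf : ∀ a, lev a ≠ 0 → lev (f a) + 1 = lev a) (a : α)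
    {j : ℕ} (hj : j ≤ lev a) : (parentGraph f lev).Reachable a (f^[j] a) := by
  induction j with
  | zero => rfl
  | succ j ih =>
    rw [Function.iterate_succ_apply']
    exact (ih (by omega)).trans
      (parentGraph_adj_self hf (by rw [lev_iterate hf (by omega)]; omega)).reachable

lemma parentGraph_connected [Nonempty α] (hf : ∀ a, lev a ≠ 0 → lev (f a) + 1 = lev a)
    (hroot : ∀ a b, lev a = 0 → lev b = 0 → a = b) : (parentGraph f lev).Connected := by
  have hreach (a b : α) : (parentGraph f lev).Reachable a (f^[lev b] b) := by
    rw [hroot (f^[lev b] b) (f^[lev a] a) (by simp [lev_iterate hf]) (by simp [lev_iterate hf])]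
    exact parentGraph_reachable_iterate hf a le_rfl
  exact ⟨fun a b => (hreach a b).trans (parentGraph_reachable_iterate hf b le_rfl).symm⟩

variable (f lev) in
def descendants (a : α) : Set α := {x | ∃ j ≤ lev x, f^[j] x = a}

lemma eq_of_adj_of_mem_descendants (hf : ∀ a, lev a ≠ 0 → lev (f a) + 1 = lev a)
    {a x y : α} (hx : x ∈ descendants f lev a) (hy : y ∉ descendants f lev a)
    (hxy : (parentGraph f lev).Adj x y) : x = a ∧ y = f a := by
  obtain ⟨j, hj, rfl⟩ := hx
  rcases hxy.2 with ⟨rfl, hy0⟩ | ⟨rfl, hx0⟩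
  · exact absurd ⟨j + 1, by have := hf y hy0; omega, rfl⟩ hy
  · cases j with
    | zero => exact ⟨rfl, rfl⟩
    | succ j => exact absurd ⟨j, by have := hf x hx0; omega, rfl⟩ hy

lemma parentGraph_isAcyclic (hf : ∀ a, lev a ≠ 0 → lev (f a) + 1 = lev a) :
    (parentGraph f lev).IsAcyclic := by
  have hbridge {a : α} (ha : lev a ≠ 0) : (parentGraph f lev).IsBridge s(a, f a) := by
    refine isBridge_iff_forall_walk_mem_edges.mpr fun p => ?_
    have hfa : f a ∉ descendants f lev a := by
      rintro ⟨j, hj, hja⟩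
      have := lev_iterate hf hj
      rw [hja] at this
      have := hf a ha
      omega
    obtain ⟨⟨⟨x, y⟩, hxy⟩, hd, hx, hy⟩ :=
      p.exists_boundary_dart (descendants f lev a) ⟨0, Nat.zero_le _, rfl⟩ hfa
    obtain ⟨hxa, hya⟩ := eq_of_adj_of_mem_descendants hf hx hy hxy
    rw [show s(a, f a) = s(x, y) by rw [← hya, ← hxa]]
    exact List.mem_map_of_mem hd
  refine isAcyclic_iff_forall_adj_isBridge.mpr fun a b hab => ?_
  rcases hab.2 with ⟨rfl, hb⟩ | ⟨rfl, ha⟩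
  · exact Sym2.eq_swap ▸ hbridge hb
  · exact hbridge ha

lemma exists_iterate_eq_of_walk (hf : ∀ a, lev a ≠ 0 → lev (f a) + 1 = lev a) {a b : α}
    (w : (parentGraph f lev).Walk a b) : ∃ j₁ j₂, j₁ ≤ lev a ∧ j₂ ≤ lev b ∧
      j₁ + j₂ ≤ w.length ∧ f^[j₁] a = f^[j₂] b := by
  induction w with
  | nil => exact ⟨0, 0, by simp⟩
  | @cons a c b hac w ih =>
    obtain ⟨j₁, j₂, h₁, h₂, hlen, heq⟩ := ih
    rw [Walk.length_cons]
    rcases hac.2 with ⟨rfl, hc⟩ | ⟨rfl, ha⟩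
    · have := hf c hc
      cases j₁ with
      | zero =>
        refine ⟨0, j₂ + 1, Nat.zero_le _, ?_, by omega, ?_⟩
        · have := lev_iterate hf h₂
          rw [← heq, Function.iterate_zero_apply] at this
          omega
        · rw [Function.iterate_succ_apply', ← heq]; rfl
      | succ j => exact ⟨j, j₂, by omega, h₂, by omega, heq⟩
    · exact ⟨j₁ + 1, j₂, by have := hf a ha; omega, h₂, by omega, heq⟩

end ParentGraph

section LevelTree

variable {V : Type*} {G : SimpleGraph V} {v₀ : V}

variable (G) in
def LevelRel (v₀ u v : V) : Prop :=
  G.dist v₀ u = G.dist v₀ v ∧ ∃ p : G.Walk u v, ∀ x ∈ p.support, G.dist v₀ u ≤ G.dist v₀ x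

lemma LevelRel.refl (v : V) : G.LevelRel v₀ v v := ⟨rfl, .nil, by simp⟩

lemma LevelRel.symm {u v : V} (h : G.LevelRel v₀ u v) : G.LevelRel v₀ v u := by
  obtain ⟨huv, p, hp⟩ := h
  exact ⟨huv.symm, p.reverse, fun x hx => huv ▸ hp x (by simpa using hx)⟩

lemma LevelRel.trans {u v w : V} (h : G.LevelRel v₀ u v) (h' : G.LevelRel v₀ v w) :
    G.LevelRel v₀ u w := by
  obtain ⟨huv, p, hp⟩ := h
  obtain ⟨hvw, q, hq⟩ := h'
  refine ⟨huv.trans hvw, p.append q, fun x hx => ?_⟩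
  rcases Walk.mem_support_append_iff _ _ |>.mp hx with hx | hx
  · exact hp x hx
  · exact huv ▸ hq x hx

lemma LevelRel.of_adj_of_adj {u v x y : V} (h : G.LevelRel v₀ u v) (hxu : G.Adj x u)
    (hyv : G.Adj y v) (hx : G.dist v₀ x + 1 = G.dist v₀ u) (hy : G.dist v₀ y + 1 = G.dist v₀ v) :
    G.LevelRel v₀ x y := by
  obtain ⟨huv, p, hp⟩ := h
  refine ⟨by omega, .cons hxu (p.append hyv.symm.toWalk), fun z hz => ?_⟩
  simp only [Walk.support_cons, Walk.support_append, Adj.toWalk, Walk.support_nil,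
    List.tail_cons, List.mem_cons, List.mem_append, List.not_mem_nil, or_false] at hz
  rcases hz with rfl | hz | rfl
  · exact le_rfl
  · have := hp z hz; omega
  · omega

variable (G v₀) in
def levelSetoid : Setoid V := ⟨G.LevelRel v₀, ⟨LevelRel.refl, LevelRel.symm, LevelRel.trans⟩⟩

variable (G v₀) in
abbrev LevelComponent : Type _ := Quotient (G.levelSetoid v₀)

open Classical in
variable (G v₀) in
noncomputable def levelParent (v : V) : V :=
  if h : ∃ u, G.Adj u v ∧ G.dist v₀ u + 1 = G.dist v₀ v then h.choose else v

lemma levelParent_spec {v : V} (hv : G.dist v₀ v ≠ 0) :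
    G.Adj (G.levelParent v₀ v) v ∧ G.dist v₀ (G.levelParent v₀ v) + 1 = G.dist v₀ v := by
  have hex : ∃ u, G.Adj u v ∧ G.dist v₀ u + 1 = G.dist v₀ v := by
    obtain ⟨p, hp⟩ := (Reachable.of_dist_ne_zero hv).symm.exists_walk_length_eq_dist
    have hnil : ¬p.Nil := fun h => hv (by rw [dist_comm, ← hp, h.length_eq_zero])
    refine ⟨p.snd, (p.adj_snd hnil).symm, ?_⟩
    have hle : G.dist p.snd v₀ ≤ p.tail.length := dist_le p.tail
    have htri := (p.adj_snd hnil).reachable.dist_triangle_left v₀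
    have hstep : G.dist v p.snd = 1 := dist_eq_one_iff_adj.mpr (p.adj_snd hnil)
    have := p.length_tail_add_one hnil
    rw [dist_comm, dist_comm (u := v₀)]
    omega
  rw [levelParent, dif_pos hex]
  exact hex.choose_spec

lemma LevelRel.levelParent {u v : V} (h : G.LevelRel v₀ u v) :
    G.LevelRel v₀ (G.levelParent v₀ u) (G.levelParent v₀ v) := by
  by_cases hu : G.dist v₀ u = 0
  · have hv : G.dist v₀ v = 0 := h.1 ▸ hu
    have hex (w : V) (hw : G.dist v₀ w = 0) : G.levelParent v₀ w = w := by
      rw [SimpleGraph.levelParent, dif_neg]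
      rintro ⟨x, -, hx⟩
      omega
    rwa [hex u hu, hex v hv]
  · have hv : G.dist v₀ v ≠ 0 := h.1 ▸ hu
    exact h.of_adj_of_adj (levelParent_spec hu).1 (levelParent_spec hv).1
      (levelParent_spec hu).2 (levelParent_spec hv).2

namespace LevelComponent

variable (G v₀) in
noncomputable def parent : G.LevelComponent v₀ → G.LevelComponent v₀ :=
  Quotient.map (G.levelParent v₀) fun _ _ => LevelRel.levelParent

variable (G v₀) in
noncomputable def level : G.LevelComponent v₀ → ℕ :=
  Quotient.lift (G.dist v₀) fun _ _ h => h.1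

lemma level_parent_add_one {a : G.LevelComponent v₀} (ha : level G v₀ a ≠ 0) :
    level G v₀ (parent G v₀ a) + 1 = level G v₀ a := by
  induction a using Quotient.ind with
  | _ v => exact (levelParent_spec ha).2

end LevelComponent

open LevelComponent

variable (G v₀) in
noncomputable def levelTree : SimpleGraph (G.LevelComponent v₀) :=
  parentGraph (parent G v₀) (level G v₀)

lemma levelTree_isTree (hconn : G.Connected) : (G.levelTree v₀).IsTree := by
  have : Nonempty (G.LevelComponent v₀) := ⟨⟦v₀⟧⟩
  have hroot (a : G.LevelComponent v₀) (ha : level G v₀ a = 0) : a = ⟦v₀⟧ := by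
    induction a using Quotient.ind with
    | _ v => rw [(hconn v₀ v).dist_eq_zero_iff.mp ha]
  exact ⟨parentGraph_connected (fun _ => level_parent_add_one)
      fun a b ha hb => (hroot a ha).trans (hroot b hb).symm,
    parentGraph_isAcyclic fun _ => level_parent_add_one⟩

lemma mk_eq_or_levelTree_adj {x y : V} (h : G.Adj x y) :
    (⟦x⟧ : G.LevelComponent v₀) = ⟦y⟧ ∨ (G.levelTree v₀).Adj ⟦x⟧ ⟦y⟧ := by
  have hchild {x y : V} (h : G.Adj x y) (hxy : G.dist v₀ x + 1 = G.dist v₀ y) :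
      (G.levelTree v₀).Adj ⟦y⟧ ⟦x⟧ := by
    have hy : G.dist v₀ y ≠ 0 := by omega
    have hpar : parent G v₀ ⟦y⟧ = ⟦x⟧ := Quotient.sound <|
      (LevelRel.refl y).of_adj_of_adj (levelParent_spec hy).1 h (levelParent_spec hy).2 hxy
    exact hpar ▸ parentGraph_adj_self (fun _ => level_parent_add_one) hy
  have hlevels : G.dist v₀ x = G.dist v₀ y ∨ G.dist v₀ x + 1 = G.dist v₀ y ∨
      G.dist v₀ y + 1 = G.dist v₀ x := by
    have := h.diff_dist_adj (u := v₀)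
    omega
  rcases hlevels with hxy | hxy | hxy
  · refine .inl (Quotient.sound ⟨hxy, h.toWalk, fun z hz => ?_⟩)
    rcases List.mem_pair.mp hz with rfl | rfl <;> omega
  · exact .inr (hchild h hxy).symm
  · exact .inr (hchild h.symm hxy)

lemma exists_dist_le_iterate_parent_eq (u : V) {j : ℕ} (hj : j ≤ G.dist v₀ u) :
    ∃ x, G.dist x u ≤ j ∧ (parent G v₀)^[j] ⟦u⟧ = ⟦x⟧ := by
  induction j with
  | zero => exact ⟨u, by simp, rfl⟩
  | succ j ih =>
    obtain ⟨x, hxu, hx⟩ := ih (by omega)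
    have hlev : G.dist v₀ x = G.dist v₀ u - j := by
      have := lev_iterate (f := parent G v₀) (lev := level G v₀) (fun _ => level_parent_add_one)
        (a := ⟦u⟧) (Nat.le_of_succ_le hj)
      rwa [hx] at this
    obtain ⟨hadj, -⟩ := levelParent_spec (show G.dist v₀ x ≠ 0 by omega)
    refine ⟨G.levelParent v₀ x, ?_, by rw [Function.iterate_succ_apply', hx]; rfl⟩
    have := hadj.reachable.dist_triangle_left u
    rw [dist_eq_one_iff_adj.mpr hadj] at this
    omega

lemma dist_le_length_add_of_levelTree_walk (hconn : G.Connected) {D : ℕ}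
    (hD : ∀ x y, G.LevelRel v₀ x y → G.dist x y ≤ D) {u v : V}
    (w : (G.levelTree v₀).Walk ⟦u⟧ ⟦v⟧) : G.dist u v ≤ w.length + D := by
  obtain ⟨j₁, j₂, hj₁, hj₂, hlen, heq⟩ :=
    exists_iterate_eq_of_walk (fun _ => level_parent_add_one) w
  replace hlen : j₁ + j₂ ≤ w.length := hlen
  obtain ⟨x₁, hx₁, hx₁eq⟩ := exists_dist_le_iterate_parent_eq u hj₁
  obtain ⟨x₂, hx₂, hx₂eq⟩ := exists_dist_le_iterate_parent_eq v hj₂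
  have hx₁₂ := hD x₁ x₂ (Quotient.exact (hx₁eq.symm.trans (heq.trans hx₂eq)))
  have := hconn.dist_triangle (u := u) (v := x₁) (w := v)
  have := hconn.dist_triangle (u := x₁) (v := x₂) (w := v)
  have : G.dist u x₁ = G.dist x₁ u := dist_comm
  omega

end LevelTree

end SimpleGraph

lemma IsQuasiIsometry.mono {V W : Type} {G : SimpleGraph V} {H : SimpleGraph W} {L C C' : ℕ}
    {φ : V → W} (hφ : IsQuasiIsometry G H L C φ) (hC : C ≤ C') : IsQuasiIsometry G H L C' φ := by
  have hC' : (C : ℕ∞) ≤ C' := by exact_mod_cast hC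
  obtain ⟨h₁, h₂, h₃⟩ := hφ
  refine ⟨fun u v huv => (h₁ u v huv).trans (by gcongr), fun u v huv => (h₂ u v huv).trans
    (by gcongr), fun y => ?_⟩
  obtain ⟨v, hv⟩ := h₃ y
  exact ⟨v, hv.trans hC'⟩

lemma isQuasiIsometry_levelTree {V : Type} {G : SimpleGraph V} {v₀ : V} (hconn : G.Connected)
    {D : ℕ} (hD : ∀ x y, G.LevelRel v₀ x y → G.dist x y ≤ D) :
    IsQuasiIsometry G (G.levelTree v₀) 1 D (Quotient.mk _) := by
  refine ⟨fun u v _ => ?_, fun u v _ => ?_, fun a => ?_⟩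
  · rw [Nat.cast_one, one_mul]
    exact (edist_le_of_forall_adj (fun _ _ => mk_eq_or_levelTree_adj) u v).trans le_self_add
  · obtain ⟨w, hw⟩ := ((levelTree_isTree hconn).1 ⟦u⟧ ⟦v⟧).exists_walk_length_eq_edist
    rw [← (hconn u v).coe_dist_eq_edist, ← hw, Nat.cast_one, one_mul]
    exact_mod_cast dist_le_length_add_of_levelTree_walk hconn hD w
  · induction a using Quotient.ind with
    | _ v => exact ⟨v, by simp⟩

namespace IsTreeDecomp

variable {V τ : Type} {G : SimpleGraph V} {T : SimpleGraph τ} {B : τ → Set V}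

lemma exists_mem_support_of_mem_edges (hdec : IsTreeDecomp G T B) {a b : V} (W : G.Walk a b)
    {ta tb : τ} (ha : a ∈ B ta) (hb : b ∈ B tb) {q : T.Walk ta tb} (hq : q.IsPath) {t t' : τ}
    (he : s(t, t') ∈ q.edges) : ∃ x ∈ W.support, x ∈ B t ∧ x ∈ B t' := by
  induction W generalizing ta with
  | nil =>
    exact ⟨_, Walk.start_mem_support _,
      hdec.interp ta t tb q hq (q.fst_mem_support_of_mem_edges he) ⟨ha, hb⟩,
      hdec.interp ta t' tb q hq (q.snd_mem_support_of_mem_edges he) ⟨ha, hb⟩⟩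
  | @cons a c b hac W ih =>
    obtain ⟨s, has, hcs⟩ := hdec.edges a c hac
    obtain ⟨p₁, hp₁, -⟩ := hdec.isTree.existsUnique_path ta s
    obtain ⟨p₂, hp₂, -⟩ := hdec.isTree.existsUnique_path s tb
    have hsub := hdec.isTree.isAcyclic.edges_subset_edges_of_isPath hq (p₁.append p₂) he
    rw [Walk.edges_append, List.mem_append] at hsub
    rcases hsub with he₁ | he₂
    · exact ⟨a, Walk.start_mem_support _,
        hdec.interp ta t s p₁ hp₁ (p₁.fst_mem_support_of_mem_edges he₁) ⟨ha, has⟩,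
        hdec.interp ta t' s p₁ hp₁ (p₁.snd_mem_support_of_mem_edges he₁) ⟨ha, has⟩⟩
    · obtain ⟨x, hx, hxB⟩ := ih hcs hb hp₂ he₂
      exact ⟨x, List.mem_cons_of_mem a hx, hxB⟩

lemma dist_le_of_levelRel (hdec : IsTreeDecomp G T B) (hconn : G.Connected) {r : ℕ}
    (hB : ∀ t, ∀ x ∈ B t, ∀ y ∈ B t, G.dist x y ≤ r) {v₀ w₁ w₂ : V}
    (h : G.LevelRel v₀ w₁ w₂) : G.dist w₁ w₂ ≤ 3 * r := by
  obtain ⟨hlev, P, hP⟩ := h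
  obtain ⟨p₁, hp₁⟩ := hconn.exists_walk_length_eq_dist v₀ w₁
  obtain ⟨p₂, hp₂⟩ := hconn.exists_walk_length_eq_dist v₀ w₂
  obtain ⟨ta, hta⟩ := hdec.covers w₁
  obtain ⟨tb, htb⟩ := hdec.covers w₂
  obtain ⟨q, hq, -⟩ := hdec.isTree.existsUnique_path ta tb
  let near₂ : Set τ := {t | ∃ z ∈ B t, G.dist z w₂ ≤ r}
  by_cases hta₂ : ta ∈ near₂
  · obtain ⟨z, hz, hzw⟩ := hta₂
    have := hB ta w₁ hta z hz
    have := hconn.dist_triangle (u := w₁) (v := z) (w := w₂)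
    omega
  obtain ⟨⟨⟨t, t'⟩, _⟩, hd, ht, ht'⟩ :=
    q.exists_boundary_dart near₂ᶜ hta₂ (not_not.mpr ⟨w₂, htb, by simp⟩)
  have he : s(t, t') ∈ q.edges := List.mem_map_of_mem hd
  obtain ⟨x, hxP, hxt, -⟩ := hdec.exists_mem_support_of_mem_edges P hta htb hq he
  obtain ⟨y, hyQ, hyt, hyt'⟩ :=
    hdec.exists_mem_support_of_mem_edges (p₁.reverse.append p₂) hta htb hq he
  obtain ⟨z, hzt', hzw⟩ := not_not.mp ht'
  -- `y` shares a bag with `x`, which lies above level `n`, so `y` lies above level `n - r`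
  have hyx := hB t y hyt x hxt
  have hx := hP x hxP
  have := hconn.dist_triangle (u := v₀) (v := y) (w := x)
  have hyw₁ : G.dist y w₁ ≤ r := by
    rcases dist_add_dist_le_or_of_mem_support_reverse_append hp₁ hp₂ hyQ with hy | hy
    · omega
    · exact absurd ⟨y, hyt, by omega⟩ ht
  have hyz := hB t' y hyt' z hzt'
  have := hconn.dist_triangle (u := w₁) (v := y) (w := w₂)
  have := hconn.dist_triangle (u := y) (v := z) (w := w₂)
  have : G.dist w₁ y = G.dist y w₁ := dist_comm
  omega

end IsTreeDecomp

theorem stmt16 (r : ℕ) {V τ : Type} (G : SimpleGraph V) (hconn : G.Connected)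
    (T : SimpleGraph τ) (B : τ → Set V) (hdec : IsTreeDecomp G T B)
    (hdiam : ∀ t, ∀ u ∈ B t, ∀ v ∈ B t, G.edist u v ≤ (r : ℕ∞)) :
    ∃ (σ : Type) (S : SimpleGraph σ) (φ : V → σ),
      S.IsTree ∧ IsQuasiIsometry G S 1 (6 * r + 1) φ := by
  obtain ⟨v₀⟩ := hconn.nonempty
  have hB : ∀ t, ∀ x ∈ B t, ∀ y ∈ B t, G.dist x y ≤ r :=
    fun t x hx y hy => ENat.toNat_le_of_le_natCast (hdiam t x hx y hy)
  refine ⟨G.LevelComponent v₀, G.levelTree v₀, Quotient.mk _, levelTree_isTree hconn, ?_⟩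
  exact (isQuasiIsometry_levelTree hconn fun _ _ => hdec.dist_le_of_levelRel hconn hB).mono
    (by omega)
end

section
/- Every pseudo-path-decomposition (B_1, ..., B_n) of a graph G in which each bag has size at most w+1 yields a path-decomposition of G of width at most w+1: the sequence (B_1, B_1 ∪ B_2 minus appropriate vertices, ..., B_n) obtained by inserting, for each edge uv witnessed only by consecutive bags B_i, B_{i+1} with B_i \ B_{i+1} = {u} and B_{i+1} \ B_i = {v}, the bag B_i ∪ {v} between B_i and B_{i+1}, is a path-decomposition of G of width at most w+1. In particular, path-width is at most pseudo-path-width plus one. -/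
open SimpleGraph Set

/-!
Between consecutive bags `B i` and `B (i+1)` insert the bag `B i ∪ B (i+1)` whenever
`B (i+1) \ B i` has at most one vertex. The new bags have at most one vertex more than the
old ones, and they cover every edge `uv` witnessed by `B i \ B (i+1) = {u}`,
`B (i+1) \ B i = {v}`. Interpolation survives because each inserted bag lies between the
intersection and the union of its two neighbours.
-/

namespace PathDecomposition

variable {V : Type*}

def Interpolates {ι : Type*} [Preorder ι] (B : ι → Set V) : Prop :=
  ∀ i j l, i ≤ j → j ≤ l → B i ∩ B l ⊆ B j

theorem Interpolates.comp_monotone {ι κ : Type*} [Preorder ι] [Preorder κ] {B : κ → Set V}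
    (hB : Interpolates B) {f : ι → κ} (hf : Monotone f) : Interpolates (B ∘ f) :=
  fun _ _ _ hij hjl => hB _ _ _ (hf hij) (hf hjl)

theorem Interpolates.of_subset_union_of_inter_subset {B D : ℕ → Set V} (hB : Interpolates B)
    (hsub : ∀ k, D k ⊆ B (k / 2) ∪ B ((k + 1) / 2))
    (hsup : ∀ k, B (k / 2) ∩ B ((k + 1) / 2) ⊆ D k) : Interpolates D := by
  intro a b c hab hbc x ⟨hxa, hxc⟩
  rcases hab.eq_or_lt with rfl | hab
  · exact hxa
  rcases hbc.eq_or_lt with rfl | hbc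
  · exact hxc
  obtain ⟨p, hp, hxp⟩ : ∃ p ≤ (a + 1) / 2, x ∈ B p := by
    rcases hsub a hxa with h | h
    exacts [⟨a / 2, by omega, h⟩, ⟨(a + 1) / 2, le_rfl, h⟩]
  obtain ⟨q, hq, hxq⟩ : ∃ q ≥ c / 2, x ∈ B q := by
    rcases hsub c hxc with h | h
    exacts [⟨c / 2, le_rfl, h⟩, ⟨(c + 1) / 2, by omega, h⟩]
  exact hsup b ⟨hB p _ q (by omega) (by omega) ⟨hxp, hxq⟩,
    hB p _ q (by omega) (by omega) ⟨hxp, hxq⟩⟩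

section ExtendEmpty

variable {n : ℕ} (B : Fin n → Set V)

def extendEmpty (i : ℕ) : Set V :=
  if h : i < n then B ⟨i, h⟩ else ∅

variable {B}

theorem extendEmpty_of_lt {i : ℕ} (h : i < n) : extendEmpty B i = B ⟨i, h⟩ :=
  dif_pos h

theorem extendEmpty_val (i : Fin n) : extendEmpty B i = B i :=
  extendEmpty_of_lt i.2

theorem Interpolates.extendEmpty (hB : Interpolates B) : Interpolates (extendEmpty B) := by
  intro i j l hij hjl
  by_cases hl : l < n
  · have hj := hjl.trans_lt hl
    have hi := hij.trans_lt hj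
    rw [extendEmpty_of_lt hi, extendEmpty_of_lt hj, extendEmpty_of_lt hl]
    exact hB _ _ _ hij hjl
  · simp [PathDecomposition.extendEmpty, hl]

theorem encard_extendEmpty_le {k : ℕ∞} (hB : ∀ i, (B i).encard ≤ k) (i : ℕ) :
    (extendEmpty B i).encard ≤ k := by
  by_cases hi : i < n
  · rw [extendEmpty_of_lt hi]
    exact hB _
  · simp [extendEmpty, hi]

end ExtendEmpty

section BridgeBags

/-- At even `k = 2i` both indices are `i` and the bag is `B i`; at `k = 2i+1` it is
`B i ∪ B (i+1)` or `B i`. -/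
def bridgeBags (B : ℕ → Set V) (k : ℕ) : Set V :=
  if (B ((k + 1) / 2) \ B (k / 2)).encard ≤ 1 then B (k / 2) ∪ B ((k + 1) / 2) else B (k / 2)

variable {B : ℕ → Set V}

theorem subset_bridgeBags (k : ℕ) : B (k / 2) ⊆ bridgeBags B k := by
  unfold bridgeBags
  split_ifs
  exacts [subset_union_left, subset_rfl]

theorem bridgeBags_subset (k : ℕ) : bridgeBags B k ⊆ B (k / 2) ∪ B ((k + 1) / 2) := by
  unfold bridgeBags
  split_ifs
  exacts [subset_rfl, subset_union_left]

theorem subset_bridgeBags_two_mul (i : ℕ) : B i ⊆ bridgeBags B (2 * i) := by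
  simpa using subset_bridgeBags (B := B) (2 * i)

theorem bridgeBags_two_mul_add_one {i : ℕ} (h : (B (i + 1) \ B i).encard ≤ 1) :
    bridgeBags B (2 * i + 1) = B i ∪ B (i + 1) := by
  have h₁ : (2 * i + 1) / 2 = i := by omega
  have h₂ : (2 * i + 1 + 1) / 2 = i + 1 := by omega
  simp only [bridgeBags, h₁, h₂, if_pos h]

theorem encard_bridgeBags_le (k : ℕ) : (bridgeBags B k).encard ≤ (B (k / 2)).encard + 1 := by
  unfold bridgeBags
  split_ifs with h
  · calc (B (k / 2) ∪ B ((k + 1) / 2)).encard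
        = (B (k / 2) ∪ B ((k + 1) / 2) \ B (k / 2)).encard := by rw [union_sdiff_self]
      _ ≤ (B (k / 2)).encard + 1 := (encard_union_le _ _).trans (by gcongr)
  · exact le_self_add

theorem Interpolates.bridgeBags (hB : Interpolates B) : Interpolates (bridgeBags B) :=
  hB.of_subset_union_of_inter_subset bridgeBags_subset
    fun k => inter_subset_left.trans (subset_bridgeBags k)

end BridgeBags

end PathDecomposition

open PathDecomposition

theorem IsPseudoPathDecomp.isPathDecomp_bridgeBags {V : Type} {G : SimpleGraph V} {n : ℕ}
    {B : Fin n → Set V} (hB : IsPseudoPathDecomp G B) :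
    IsPathDecomp G (fun k : Fin (2 * n) => bridgeBags (extendEmpty B) k) where
  covers v := by
    obtain ⟨i, hi⟩ := hB.covers v
    exact ⟨⟨2 * i, by omega⟩, subset_bridgeBags_two_mul (B := extendEmpty B) i
      (by rwa [extendEmpty_val])⟩
  edges u v huv := by
    rcases hB.edges u v huv with ⟨i, hu, hv⟩ | ⟨i, hi, hu, hv⟩
    · rw [← extendEmpty_val (B := B)] at hu hv
      exact ⟨⟨2 * i, by omega⟩, subset_bridgeBags_two_mul _ hu, subset_bridgeBags_two_mul _ hv⟩
    · rw [← extendEmpty_val (B := B) i, ← extendEmpty_of_lt (B := B) hi] at hu hv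
      have hu' : u ∈ extendEmpty B i \ extendEmpty B (i + 1) := by rw [hu]; rfl
      have hv' : v ∈ extendEmpty B (i + 1) \ extendEmpty B i := by rw [hv]; rfl
      refine ⟨⟨2 * i + 1, by omega⟩, ?_⟩
      rw [bridgeBags_two_mul_add_one (by rw [hv, encard_singleton])]
      exact ⟨Or.inl hu'.1, Or.inr hv'.1⟩
  interp :=
    (Interpolates.extendEmpty hB.interp).bridgeBags.comp_monotone Fin.val_strictMono.monotone

theorem stmt17 {V : Type} (G : SimpleGraph V) (w n : ℕ) (B : Fin n → Set V)
    (hdec : IsPseudoPathDecomp G B) (hwid : ∀ i, (B i).encard ≤ w + 1) :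
    ∃ (m : ℕ) (D : Fin m → Set V),
      IsPathDecomp G D ∧ ∀ i, (D i).encard ≤ w + 2 :=
  ⟨2 * n, _, hdec.isPathDecomp_bridgeBags, fun k => calc
    _ ≤ (extendEmpty B (k / 2)).encard + 1 := encard_bridgeBags_le _
    _ ≤ w + 1 + 1 := by gcongr; exact encard_extendEmpty_le hwid _
    _ = w + 2 := by ring⟩
end
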